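/- Let A, B ∈ GL(2,ℝ) be hyperbolic matrices, i.e. each has two real eigenvalues, one of absolute value less than 1 and one of absolute value greater than 1; denote by E^s_M and E^u_M the eigenlines of a hyperbolic matrix M for its eigenvalues of absolute value less than 1 and greater than 1, respectively. If AB ≠ BA, then for at least one of the pairs (A',B') ∈ {(A,B), (A,B⁻¹)} there exists an open set C ⊆ ℝ²∖{0}, invariant under multiplication by all nonzero real scalars, such that E^s_{A'}∖{0} ⊆ C, E^s_{B'}∖{0} ⊆ C, E^u_{A'} ∩ C = ∅ and E^u_{B'} ∩ C = ∅. -/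
import Mathlib


open Matrix Submodule

private lemma symm_notmem {u v : Fin 2 → ℝ} (hu : u ≠ 0)
    (h : v ∉ span ℝ ({u} : Set (Fin 2 → ℝ))) : u ∉ span ℝ ({v} : Set (Fin 2 → ℝ)) := by
  intro hm
  rcases Submodule.mem_span_singleton.mp hm with ⟨c, hc⟩
  rcases eq_or_ne c 0 with rfl | hcne
  · exact hu (by simpa using hc.symm)
  · exact h (Submodule.mem_span_singleton.mpr ⟨c⁻¹, by rw [← hc, smul_smul, inv_mul_cancel₀ hcne, one_smul]⟩)

private lemma line_inter {u v : Fin 2 → ℝ} (h : v ∉ span ℝ ({u} : Set (Fin 2 → ℝ))) :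
    ∀ x, x ∈ span ℝ ({u} : Set (Fin 2 → ℝ)) → x ∈ span ℝ ({v} : Set (Fin 2 → ℝ)) → x = 0 := by
  intro x hx hx'
  rcases Submodule.mem_span_singleton.mp hx' with ⟨b, rfl⟩
  rcases eq_or_ne b 0 with rfl | hb
  · simp
  · exact (h (by simpa [smul_smul, inv_mul_cancel₀ hb] using
      (span ℝ ({u} : Set (Fin 2 → ℝ))).smul_mem b⁻¹ hx)).elim

/-- Eigenvectors of the same matrix for distinct eigenvalues span distinct lines. -/
private lemma eig_notmem {M : Matrix (Fin 2) (Fin 2) ℝ} {l₁ l₂ : ℝ} {v₁ v₂ : Fin 2 → ℝ}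
    (hv₂ : v₂ ≠ 0) (h₁ : M.mulVec v₁ = l₁ • v₁) (h₂ : M.mulVec v₂ = l₂ • v₂)
    (hne : l₁ ≠ l₂) : v₂ ∉ span ℝ ({v₁} : Set (Fin 2 → ℝ)) := by
  intro hm
  rcases Submodule.mem_span_singleton.mp hm with ⟨c, hc⟩
  have : l₂ • v₂ = l₁ • v₂ := by
    rw [← h₂, ← hc, Matrix.mulVec_smul, h₁, smul_comm]
  have : (l₂ - l₁) • v₂ = 0 := by rw [sub_smul, this, sub_self]
  rcases smul_eq_zero.mp this with h | h
  · exact hne (by linarith [sub_eq_zero.mp h])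
  · exact hv₂ h

/-- The complement of two lines is a suitable cone, given the stable lines differ from
the unstable ones. -/
private lemma cone_of_lines (w₁ w₂ u₁ u₂ : Fin 2 → ℝ)
    (h11 : w₁ ∉ span ℝ ({u₁} : Set (Fin 2 → ℝ)))
    (h12 : w₁ ∉ span ℝ ({u₂} : Set (Fin 2 → ℝ)))
    (h21 : w₂ ∉ span ℝ ({u₁} : Set (Fin 2 → ℝ)))
    (h22 : w₂ ∉ span ℝ ({u₂} : Set (Fin 2 → ℝ))) :
    ∃ C : Set (Fin 2 → ℝ), IsOpen C ∧ (0 : Fin 2 → ℝ) ∉ C ∧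
      (∀ c : ℝ, c ≠ 0 → ∀ v ∈ C, c • v ∈ C) ∧
      (span ℝ {w₁} : Set (Fin 2 → ℝ)) \ {0} ⊆ C ∧
      (span ℝ {w₂} : Set (Fin 2 → ℝ)) \ {0} ⊆ C ∧
      (span ℝ {u₁} : Set (Fin 2 → ℝ)) ∩ C = ∅ ∧
      (span ℝ {u₂} : Set (Fin 2 → ℝ)) ∩ C = ∅ := by
  refine ⟨((span ℝ {u₁} : Set (Fin 2 → ℝ)) ∪ (span ℝ {u₂} : Set (Fin 2 → ℝ)))ᶜ,
    ?_, ?_, ?_, ?_, ?_, ?_, ?_⟩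
  · exact (IsClosed.union (span ℝ {u₁}).closed_of_finiteDimensional
      (span ℝ {u₂}).closed_of_finiteDimensional).isOpen_compl
  · intro h
    exact h (Or.inl (span ℝ {u₁}).zero_mem)
  · intro c hc v hv h
    refine hv ?_
    rcases h with h | h
    · exact Or.inl (by simpa [smul_smul, inv_mul_cancel₀ hc] using
        (span ℝ ({u₁} : Set (Fin 2 → ℝ))).smul_mem c⁻¹ h)
    · exact Or.inr (by simpa [smul_smul, inv_mul_cancel₀ hc] using
        (span ℝ ({u₂} : Set (Fin 2 → ℝ))).smul_mem c⁻¹ h)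
  · rintro x ⟨hx, hx0⟩ (h | h)
    · exact hx0 (line_inter h11 x h hx)
    · exact hx0 (line_inter h12 x h hx)
  · rintro x ⟨hx, hx0⟩ (h | h)
    · exact hx0 (line_inter h21 x h hx)
    · exact hx0 (line_inter h22 x h hx)
  · ext x
    simp only [Set.mem_inter_iff, Set.mem_compl_iff, Set.mem_union, Set.mem_empty_iff_false,
      iff_false, not_and, not_not]
    exact fun h => Or.inl h
  · ext x
    simp only [Set.mem_inter_iff, Set.mem_compl_iff, Set.mem_union, Set.mem_empty_iff_false,
      iff_false, not_and, not_not]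
    exact fun h => Or.inr h

private lemma span_eq_of_mem {u v : Fin 2 → ℝ} (hv : v ≠ 0)
    (h : v ∈ span ℝ ({u} : Set (Fin 2 → ℝ))) :
    span ℝ ({v} : Set (Fin 2 → ℝ)) = span ℝ ({u} : Set (Fin 2 → ℝ)) := by
  rcases Submodule.mem_span_singleton.mp h with ⟨c, rfl⟩
  have hc : c ≠ 0 := fun h => hv (by simp [h])
  exact Submodule.span_singleton_smul_eq (IsUnit.mk0 c hc) u

theorem noncommuting_hyperbolic_common_cone
    (A B : Matrix (Fin 2) (Fin 2) ℝ)
    (lsA luA lsB luB : ℝ) (vsA vuA vsB vuB : Fin 2 → ℝ)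
    (hvsA : vsA ≠ 0) (hvuA : vuA ≠ 0) (hvsB : vsB ≠ 0) (hvuB : vuB ≠ 0)
    (heigsA : A.mulVec vsA = lsA • vsA) (heiguA : A.mulVec vuA = luA • vuA)
    (heigsB : B.mulVec vsB = lsB • vsB) (heiguB : B.mulVec vuB = luB • vuB)
    (hlsA : |lsA| < 1) (hluA : 1 < |luA|) (hlsB : |lsB| < 1) (hluB : 1 < |luB|)
    (hcomm : A * B ≠ B * A) :
    ∃ C : Set (Fin 2 → ℝ), IsOpen C ∧ (0 : Fin 2 → ℝ) ∉ C ∧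
      (∀ c : ℝ, c ≠ 0 → ∀ v ∈ C, c • v ∈ C) ∧
      (((span ℝ {vsA} : Set (Fin 2 → ℝ)) \ {0} ⊆ C ∧
          (span ℝ {vsB} : Set (Fin 2 → ℝ)) \ {0} ⊆ C ∧
          (span ℝ {vuA} : Set (Fin 2 → ℝ)) ∩ C = ∅ ∧
          (span ℝ {vuB} : Set (Fin 2 → ℝ)) ∩ C = ∅) ∨
        ((span ℝ {vsA} : Set (Fin 2 → ℝ)) \ {0} ⊆ C ∧
          (span ℝ {vuB} : Set (Fin 2 → ℝ)) \ {0} ⊆ C ∧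
          (span ℝ {vuA} : Set (Fin 2 → ℝ)) ∩ C = ∅ ∧
          (span ℝ {vsB} : Set (Fin 2 → ℝ)) ∩ C = ∅)) := by
  have hlA : lsA ≠ luA := fun h => absurd (h ▸ hlsA) (not_lt.mpr hluA.le)
  have hlB : lsB ≠ luB := fun h => absurd (h ▸ hlsB) (not_lt.mpr hluB.le)
  -- stable/unstable eigenlines of one matrix are distinct
  have hA : vuA ∉ span ℝ ({vsA} : Set (Fin 2 → ℝ)) := eig_notmem hvuA heigsA heiguA hlA
  have hB : vuB ∉ span ℝ ({vsB} : Set (Fin 2 → ℝ)) := eig_notmem hvuB heigsB heiguB hlB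
  have hA' : vsA ∉ span ℝ ({vuA} : Set (Fin 2 → ℝ)) := symm_notmem hvsA hA
  have hB' : vsB ∉ span ℝ ({vuB} : Set (Fin 2 → ℝ)) := symm_notmem hvsB hB
  by_cases h1 : vsA ∈ span ℝ ({vuB} : Set (Fin 2 → ℝ))
  · -- span vsA = span vuB : use second pairing
    have hspan := span_eq_of_mem hvsA h1
    have h12 : vsA ∉ span ℝ ({vsB} : Set (Fin 2 → ℝ)) := by
      intro hm
      have h' := span_eq_of_mem hvsA hm
      exact hB (by rw [← h', hspan]; exact Submodule.mem_span_singleton_self _)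
    have h21 : vuB ∉ span ℝ ({vuA} : Set (Fin 2 → ℝ)) := by
      intro hm
      have h' := span_eq_of_mem hvuB hm
      exact hA' (by rw [← h']; exact h1)
    obtain ⟨C, hC1, hC2, hC3, hC4, hC5, hC6, hC7⟩ :=
      cone_of_lines vsA vuB vuA vsB hA' h12 h21 hB
    exact ⟨C, hC1, hC2, hC3, Or.inr ⟨hC4, hC5, hC6, hC7⟩⟩
  by_cases h2 : vsB ∈ span ℝ ({vuA} : Set (Fin 2 → ℝ))
  · -- span vsB = span vuA : use second pairing
    have hspan := span_eq_of_mem hvsB h2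
    have h12 : vsA ∉ span ℝ ({vsB} : Set (Fin 2 → ℝ)) := by
      intro hm
      exact hA' (by rw [← hspan]; exact hm)
    have h21 : vuB ∉ span ℝ ({vuA} : Set (Fin 2 → ℝ)) := by
      intro hm
      exact hB (by rw [hspan]; exact hm)
    obtain ⟨C, hC1, hC2, hC3, hC4, hC5, hC6, hC7⟩ :=
      cone_of_lines vsA vuB vuA vsB hA' h12 h21 hB
    exact ⟨C, hC1, hC2, hC3, Or.inr ⟨hC4, hC5, hC6, hC7⟩⟩
  · -- both stable lines differ from both unstable lines: first pairing
    obtain ⟨C, hC1, hC2, hC3, hC4, hC5, hC6, hC7⟩ :=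
      cone_of_lines vsA vsB vuA vuB hA' h1 h2 hB'
    exact ⟨C, hC1, hC2, hC3, Or.inl ⟨hC4, hC5, hC6, hC7⟩⟩
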